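/- arXiv:2109.03546 — 4 statements merged into one kernel-verified Lean document; each statement's English description precedes it below -/
import Mathlib

section
/- If x_1 ≤ x_2 ≤ … ≤ x_M and for every i ∈ {1, …, M} the tail sum function J ↦ Π_i(J) is convex on ℝ, then the expected value J ↦ Σ_{m=1}^M p(J)_m x_m is a convex function of J on ℝ. -/
open Finset

lemma tele_sum (x : ℕ → ℝ) : ∀ m : ℕ, 1 ≤ m →
    ∑ i ∈ Icc 2 m, (x i - x (i - 1)) = x m - x 1 := by
  intro m hm
  induction m with
  | zero => omega
  | succ n ih =>
    rcases Nat.eq_or_lt_of_le hm with h | h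
    · simp [← h]
    · have hn : 1 ≤ n := by omega
      rw [Finset.sum_Icc_succ_top (by omega : 2 ≤ n + 1), ih hn]
      simp only [Nat.add_sub_cancel]
      ring

lemma convexOn_finset_sum {α : Type*} (s : Finset α) (f : α → ℝ → ℝ)
    (h : ∀ i ∈ s, ConvexOn ℝ Set.univ (f i)) :
    ConvexOn ℝ Set.univ (fun J => ∑ i ∈ s, f i J) := by
  induction s using Finset.cons_induction with
  | empty => simpa using convexOn_const (0 : ℝ) convex_univ
  | cons a t ha ih =>
    simp only [Finset.sum_cons]
    exact (h a (Finset.mem_cons_self a t)).add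
      (ih fun i hi => h i (Finset.mem_cons_of_mem hi))

/-- if x_1 ≤ x_2 ≤ … ≤ x_M and every tail sum
Π_i(J) = Σ_{m=i}^M p(J)_m is convex in J, then J ↦ Σ_m p(J)_m x_m is convex. -/
theorem stmt6
    (M : ℕ) (hM : 1 ≤ M)
    (x : ℕ → ℝ) (hx_mono : ∀ m ∈ Icc 2 M, x (m - 1) ≤ x m)
    (p : ℝ → ℕ → ℝ)
    (hp_nonneg : ∀ J : ℝ, ∀ m ∈ Icc 1 M, 0 ≤ p J m)
    (hp_sum : ∀ J : ℝ, ∑ m ∈ Icc 1 M, p J m = 1)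
    (htail_convex : ∀ i ∈ Icc 1 M,
      ConvexOn ℝ Set.univ (fun J : ℝ => ∑ m ∈ Icc i M, p J m)) :
    ConvexOn ℝ Set.univ (fun J : ℝ => ∑ m ∈ Icc 1 M, p J m * x m) := by
  have key : ∀ J : ℝ, ∑ m ∈ Icc 1 M, p J m * x m
      = x 1 + ∑ i ∈ Icc 2 M, (x i - x (i - 1)) * ∑ m ∈ Icc i M, p J m := by
    intro J
    have hswap : ∑ i ∈ Icc 2 M, ∑ m ∈ Icc i M, (x i - x (i - 1)) * p J m
        = ∑ m ∈ Icc 1 M, ∑ i ∈ Icc 2 m, (x i - x (i - 1)) * p J m := by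
      rw [Finset.sum_comm' (s' := fun m => Icc 2 m) (t' := Icc 1 M)]
      intro i m
      simp only [Finset.mem_Icc]
      omega
    have h2 : ∑ i ∈ Icc 2 M, (x i - x (i - 1)) * ∑ m ∈ Icc i M, p J m
        = ∑ m ∈ Icc 1 M, (x m - x 1) * p J m := by
      simp_rw [Finset.mul_sum]
      rw [hswap]
      apply Finset.sum_congr rfl
      intro m hm
      rw [← Finset.sum_mul, tele_sum x m (Finset.mem_Icc.mp hm).1]
    rw [h2]
    calc ∑ m ∈ Icc 1 M, p J m * x m
        = ∑ m ∈ Icc 1 M, (x 1 * p J m + (x m - x 1) * p J m) := by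
          apply Finset.sum_congr rfl; intros; ring
      _ = x 1 * ∑ m ∈ Icc 1 M, p J m + ∑ m ∈ Icc 1 M, (x m - x 1) * p J m := by
          rw [Finset.sum_add_distrib, Finset.mul_sum]
      _ = x 1 + ∑ m ∈ Icc 1 M, (x m - x 1) * p J m := by
          rw [hp_sum J, mul_one]
  have heq : (fun J : ℝ => ∑ m ∈ Icc 1 M, p J m * x m)
      = fun J : ℝ => x 1 + ∑ i ∈ Icc 2 M, (x i - x (i - 1)) * ∑ m ∈ Icc i M, p J m := by
    funext J; exact key J
  rw [heq]
  apply (convexOn_const (x 1) convex_univ).add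
  apply convexOn_finset_sum
  intro i hi
  have hi' := Finset.mem_Icc.mp hi
  have hc : 0 ≤ x i - x (i - 1) := by linarith [hx_mono i hi]
  have := (htail_convex i (Finset.mem_Icc.mpr ⟨by omega, hi'.2⟩)).smul hc
  simpa [smul_eq_mul] using this
end

section
/- (Variant of Lemma 1.) Suppose the sequence m ↦ x_m − log j_m is nondecreasing and for every i ∈ {1, …, M} the tail sum function J ↦ Π_i(J) is convex on ℝ. Then the jammer's utility ψ(J) := (c₂/σ) Σ_{m=1}^M p(J)_m ( log j_m − x_m ) − J² is a concave function of J on ℝ. -/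
open Finset

/-- Abel summation for sums over `Icc 1 M`. -/
lemma abel_icc (M : ℕ) (a q : ℕ → ℝ) :
    ∑ m ∈ Icc 1 M, q m * a m
      = a 1 * (∑ m ∈ Icc 1 M, q m)
        + ∑ i ∈ Icc 2 M, (a i - a (i - 1)) * (∑ m ∈ Icc i M, q m) := by
  have tel : ∀ m : ℕ, 1 ≤ m → ∑ i ∈ Icc 2 m, (a i - a (i - 1)) = a m - a 1 := by
    intro m hm
    induction m with
    | zero => omega
    | succ n ih =>
      rcases Nat.lt_or_ge n 1 with hn | hn
      · interval_cases n
        · simp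
      · rw [Finset.sum_Icc_succ_top (by omega), ih hn]
        simp
  have step1 : ∑ m ∈ Icc 1 M, q m * a m
      = ∑ m ∈ Icc 1 M, (q m * a 1 + ∑ i ∈ Icc 2 m, q m * (a i - a (i - 1))) := by
    refine Finset.sum_congr rfl fun m hm => ?_
    have hm1 : 1 ≤ m := (Finset.mem_Icc.mp hm).1
    rw [← Finset.mul_sum, ← mul_add, tel m hm1]
    ring
  rw [step1, Finset.sum_add_distrib, ← Finset.sum_mul, mul_comm]
  congr 1
  rw [Finset.sum_comm' (t' := Icc 2 M) (s' := fun i => Icc i M)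
    (by intro m i; simp only [Finset.mem_Icc]; omega)]
  refine Finset.sum_congr rfl fun i _ => ?_
  rw [Finset.mul_sum]
  refine Finset.sum_congr rfl fun m _ => ?_
  ring

/-- variant of Lemma 1: if m ↦ x_m − log j_m is nondecreasing and
every tail sum Π_i(J) = Σ_{m=i}^M p(J)_m is convex in J, then the jammer's
utility ψ(J) = (c₂/σ) Σ_m p(J)_m (log j_m − x_m) − J² is concave in J. -/
theorem stmt8
    (M : ℕ) (hM : 1 ≤ M)
    (c₂ σ : ℝ) (hc₂ : 0 < c₂) (hσ : 0 < σ)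
    (j : ℕ → ℝ) (hj_pos : ∀ m ∈ Icc 1 M, 0 < j m)
    (hj_mono : ∀ m ∈ Icc 2 M, j (m - 1) ≤ j m)
    (x : ℕ → ℝ)
    (hdiff_mono : ∀ m ∈ Icc 2 M,
      x (m - 1) - Real.log (j (m - 1)) ≤ x m - Real.log (j m))
    (p : ℝ → ℕ → ℝ)
    (hp_nonneg : ∀ J : ℝ, ∀ m ∈ Icc 1 M, 0 ≤ p J m)
    (hp_sum : ∀ J : ℝ, ∑ m ∈ Icc 1 M, p J m = 1)
    (htail_convex : ∀ i ∈ Icc 1 M,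
      ConvexOn ℝ Set.univ (fun J : ℝ => ∑ m ∈ Icc i M, p J m)) :
    ConcaveOn ℝ Set.univ
      (fun J : ℝ =>
        (c₂ / σ) * (∑ m ∈ Icc 1 M, p J m * (Real.log (j m) - x m)) - J ^ 2) := by
  set a : ℕ → ℝ := fun m => Real.log (j m) - x m with ha
  -- coefficients are nonpositive
  have hΔ : ∀ i ∈ Icc 2 M, a i - a (i - 1) ≤ 0 := by
    intro i hi
    have := hdiff_mono i hi
    simp only [ha]
    linarith
  -- each term of the Abel sum is concave
  have hterm : ∀ i ∈ Icc 2 M, ConcaveOn ℝ Set.univ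
      (fun J : ℝ => (a i - a (i - 1)) * (∑ m ∈ Icc i M, p J m)) := by
    intro i hi
    have hi' : i ∈ Icc 1 M := by
      simp only [Finset.mem_Icc] at hi ⊢; omega
    have hconv := (htail_convex i hi').smul (c := -(a i - a (i - 1)))
      (by linarith [hΔ i hi])
    have : ConcaveOn ℝ Set.univ (-fun J : ℝ => -(a i - a (i - 1)) • ∑ m ∈ Icc i M, p J m) :=
      hconv.neg
    convert this using 1
    funext J
    simp only [Pi.neg_apply, smul_eq_mul]
    ring
  have hsum : ConcaveOn ℝ Set.univ
      (fun J : ℝ => ∑ i ∈ Icc 2 M, (a i - a (i - 1)) * (∑ m ∈ Icc i M, p J m)) := by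
    have : ConcaveOn ℝ Set.univ
        (∑ i ∈ Icc 2 M, fun J : ℝ => (a i - a (i - 1)) * (∑ m ∈ Icc i M, p J m)) :=
      Finset.sum_induction _ _ (fun f g hf hg => hf.add hg)
        (concaveOn_const (0 : ℝ) convex_univ) hterm
    convert this using 1
    funext J
    simp [Finset.sum_apply]
  -- rewrite the goal using Abel summation
  have heq : (fun J : ℝ =>
        (c₂ / σ) * (∑ m ∈ Icc 1 M, p J m * (Real.log (j m) - x m)) - J ^ 2)
      = fun J : ℝ =>
        ((c₂ / σ) • (fun J : ℝ => a 1
          + ∑ i ∈ Icc 2 M, (a i - a (i - 1)) * (∑ m ∈ Icc i M, p J m)) J)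
        + (-(J ^ 2)) := by
    funext J
    have := abel_icc M a (p J)
    simp only [ha] at this ⊢
    rw [this, hp_sum J]
    simp [smul_eq_mul]
    ring
  rw [heq]
  have hc : (0 : ℝ) ≤ c₂ / σ := le_of_lt (div_pos hc₂ hσ)
  have h1 : ConcaveOn ℝ Set.univ (fun J : ℝ => a 1
      + ∑ i ∈ Icc 2 M, (a i - a (i - 1)) * (∑ m ∈ Icc i M, p J m)) :=
    (concaveOn_const _ convex_univ).add hsum
  have h2 : ConcaveOn ℝ Set.univ (fun J : ℝ => -(J ^ 2)) :=
    (Even.convexOn_pow (even_two)).neg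
  exact (h1.smul hc).add h2
end

section
/- (Monotonicity of the relaxed ECCM solution, Theorem 2, first assertion.) Let P be an M × M matrix with strictly positive entries that is TP2, fix a row index r, let a > 0 and b ≥ 0 be constants, and let μ_s ≥ 0 for each row index s > r. If x ∈ ℝ^M satisfies the stationarity equation exp(2 x_m) = (1/2) ( a + b · Σ_{s > r} μ_s ( P_{s m} / P_{r m} − 1 ) ) for every m ∈ {1, …, M}, then x is nondecreasing: x_1 ≤ x_2 ≤ … ≤ x_M. -/
open Finset

/-- Theorem 2, first assertion: if P is an M × M matrix with
strictly positive entries that is TP2, r is a fixed row, a > 0, b ≥ 0, the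
multipliers μ_s are nonnegative for s > r, and x satisfies the stationarity
equation exp(2 x_m) = (1/2)(a + b Σ_{s>r} μ_s (P_{sm}/P_{rm} − 1)) for all m,
then x is nondecreasing. -/
theorem stmt10
    (M : ℕ) (P : Fin M → Fin M → ℝ)
    (hpos : ∀ i m, 0 < P i m)
    (hTP2 : ∀ i j : Fin M, ∀ m n : Fin M, j < i → n < m →
      P i m * P j n ≥ P i n * P j m)
    (r : Fin M) (a b : ℝ) (ha : 0 < a) (hb : 0 ≤ b)
    (μ : Fin M → ℝ) (hμ : ∀ s : Fin M, r < s → 0 ≤ μ s)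
    (x : Fin M → ℝ)
    (hstat : ∀ m : Fin M,
      Real.exp (2 * x m) =
        (1 / 2) * (a + b * ∑ s ∈ univ.filter (fun s => r < s),
          μ s * (P s m / P r m - 1))) :
    Monotone x := by
  intro m n hmn
  rcases eq_or_lt_of_le hmn with h | h
  · simp [h]
  have key : Real.exp (2 * x m) ≤ Real.exp (2 * x n) := by
    rw [hstat m, hstat n]
    have hsum : (∑ s ∈ univ.filter (fun s => r < s), μ s * (P s m / P r m - 1)) ≤
        ∑ s ∈ univ.filter (fun s => r < s), μ s * (P s n / P r n - 1) := by
      apply Finset.sum_le_sum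
      intro s hs
      rw [Finset.mem_filter] at hs
      have hμs := hμ s hs.2
      apply mul_le_mul_of_nonneg_left _ hμs
      apply sub_le_sub_right
      rw [div_le_div_iff₀ (hpos r m) (hpos r n)]
      have := hTP2 s r n m hs.2 h
      linarith
    nlinarith
  have := Real.exp_le_exp.mp key
  linarith
end

section
/- (Theorem 2, second assertion, conditional form.) Suppose x* maximizes F over the relaxed feasible set D′, the function J̄ ↦ G(x*, J̄) is concave on ℝ, and there exists δ ∈ 𝒥 with δ > J such that G(x*, δ) = G(x*, J) (a binding relaxed incentive constraint). Then x* belongs to the original feasible set D, and x* maximizes F over D. -/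
open Finset

/-- The transformed radar objective F(x). -/
noncomputable def Fobj {M : ℕ} (c₁ σ : ℝ) (j : Fin M → ℝ) (pJ : Fin M → ℝ)
    (x : Fin M → ℝ) : ℝ :=
  ∑ m, pJ m * (c₁ * σ * (x m - Real.log (j m)) - Real.exp (2 * x m))

/-- The transformed jammer objective G(x, J̄). -/
noncomputable def Gobj {M : ℕ} (c₂ σ : ℝ) (j : Fin M → ℝ) (p : ℝ → Fin M → ℝ)
    (x : Fin M → ℝ) (Jbar : ℝ) : ℝ :=
  (∑ m, p Jbar m * (c₂ / σ) * (Real.log (j m) - x m)) - Jbar ^ 2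

/-- The original feasible set D. -/
def Dset {M : ℕ} (c₂ σ : ℝ) (j : Fin M → ℝ) (p : ℝ → Fin M → ℝ)
    (Js : Finset ℝ) (J : ℝ) : Set (Fin M → ℝ) :=
  {x | ∀ Jbar ∈ Js, Gobj c₂ σ j p x J ≥ Gobj c₂ σ j p x Jbar}

/-- The relaxed feasible set D′. -/
def Dset' {M : ℕ} (c₂ σ : ℝ) (j : Fin M → ℝ) (p : ℝ → Fin M → ℝ)
    (Js : Finset ℝ) (J : ℝ) : Set (Fin M → ℝ) :=
  {x | ∀ Jbar ∈ Js, J < Jbar → Gobj c₂ σ j p x J ≥ Gobj c₂ σ j p x Jbar}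

/-- Theorem 2, second assertion, conditional form: if x*
maximizes F over the relaxed feasible set D′, J̄ ↦ G(x*, J̄) is concave on ℝ,
and some relaxed incentive constraint is binding at δ ∈ 𝒥 with δ > J, then
x* ∈ D and x* maximizes F over D. -/
theorem stmt13
    (M : ℕ) (hM : 1 ≤ M)
    (c₁ c₂ σ : ℝ) (hc₁ : 0 < c₁) (hc₂ : 0 < c₂) (hσ : 0 < σ)
    (j : Fin M → ℝ) (hj_pos : ∀ m, 0 < j m) (hj_mono : Monotone j)
    (Js : Finset ℝ) (J : ℝ) (hJ : J ∈ Js)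
    (p : ℝ → Fin M → ℝ)
    (hp_nonneg : ∀ Jbar : ℝ, ∀ m, 0 ≤ p Jbar m)
    (hp_sum : ∀ Jbar : ℝ, ∑ m, p Jbar m = 1)
    (xstar : Fin M → ℝ)
    (hx_feas : xstar ∈ Dset' c₂ σ j p Js J)
    (hx_max : ∀ x ∈ Dset' c₂ σ j p Js J,
      Fobj c₁ σ j (p J) x ≤ Fobj c₁ σ j (p J) xstar)
    (hG_concave : ConcaveOn ℝ Set.univ (fun Jbar : ℝ => Gobj c₂ σ j p xstar Jbar))
    (δ : ℝ) (hδ : δ ∈ Js) (hδJ : J < δ)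
    (hbinding : Gobj c₂ σ j p xstar δ = Gobj c₂ σ j p xstar J) :
    xstar ∈ Dset c₂ σ j p Js J ∧
      ∀ x ∈ Dset c₂ σ j p Js J,
        Fobj c₁ σ j (p J) x ≤ Fobj c₁ σ j (p J) xstar := by
  have hmem : xstar ∈ Dset c₂ σ j p Js J := by
    intro Jbar hJbar
    rcases lt_trichotomy J Jbar with h | h | h
    · exact hx_feas Jbar hJbar h
    · rw [h]
    · -- Jbar < J < δ, use concavity
      set g := fun Jbar : ℝ => Gobj c₂ σ j p xstar Jbar with hg
      have hd : (0:ℝ) < δ - Jbar := by linarith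
      set a : ℝ := (δ - J) / (δ - Jbar) with ha_def
      set b : ℝ := (J - Jbar) / (δ - Jbar) with hb_def
      have ha : 0 < a := div_pos (by linarith) hd
      have hb : 0 < b := div_pos (by linarith) hd
      have hab : a + b = 1 := by
        rw [ha_def, hb_def, ← add_div, div_eq_one_iff_eq hd.ne']
        ring
      have hcomb : a • Jbar + b • δ = J := by
        simp only [smul_eq_mul, ha_def, hb_def]
        field_simp
        ring
      have := hG_concave.2 (Set.mem_univ Jbar) (Set.mem_univ δ) ha.le hb.le hab
      rw [hcomb] at this
      simp only [smul_eq_mul] at this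
      have hgδ : g δ = g J := hbinding
      rw [hgδ] at this
      have hsplit : g J = a * g J + b * g J := by rw [← add_mul, hab, one_mul]
      have h2 : a * g Jbar ≤ a * g J := by linarith
      exact le_of_mul_le_mul_left h2 ha
  refine ⟨hmem, fun x hx => hx_max x ?_⟩
  intro Jbar hJbar _
  exact hx Jbar hJbar
end
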